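/- Phase transition (contracting regime): for a bias-free ReLU network with all weight entries equal to r = 1/d^p with p > 1, input hyper-rectangle x₀ ± ε·𝟙, and any δ > 0, if the number of layers m satisfies m ≥ (1/(p−1))·log_d(ε/(2δ)), then for every output coordinate i, min over the input hyper-rectangle of T_L^{1:m}(x)ᵢ ≥ min over the input hyper-rectangle of f̃ᵢ^{1:m}(x) − δ. -/

import Mathlib

open Matrix

/-- Entrywise positive part of a matrix. -/
noncomputable def posM {d : ℕ} (M : Matrix (Fin d) (Fin d) ℝ) : Matrix (Fin d) (Fin d) ℝ :=
  Matrix.of fun i j => max (M i j) 0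

/-- Entrywise negative part of a matrix. -/
noncomputable def negM {d : ℕ} (M : Matrix (Fin d) (Fin d) ℝ) : Matrix (Fin d) (Fin d) ℝ :=
  Matrix.of fun i j => min (M i j) 0

/-- Componentwise ReLU. -/
noncomputable def reluV {d : ℕ} (v : Fin d → ℝ) : Fin d → ℝ := fun i => max (v i) 0

/-- Exact lower bound of `W x` over the hyper-rectangle `[a, b]`. -/
noncomputable def preLo {d : ℕ} (W : Matrix (Fin d) (Fin d) ℝ) (a b : Fin d → ℝ) :
    Fin d → ℝ :=
  W.mulVec b + (posM W).mulVec (a - b)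

/-- Exact upper bound of `W x` over the hyper-rectangle `[a, b]`. -/
noncomputable def preHi {d : ℕ} (W : Matrix (Fin d) (Fin d) ℝ) (a b : Fin d → ℝ) :
    Fin d → ℝ :=
  W.mulVec b + (posM (-W)).mulVec (b - a)

/-- IBP pre-activation bound pair at layer `s` of the bias-free network with
weights `V`, from the input hyper-rectangle `[a, b]`. -/
noncomputable def ibpPre {d : ℕ} (V : ℕ → Matrix (Fin d) (Fin d) ℝ) (a b : Fin d → ℝ) :
    ℕ → (Fin d → ℝ) × (Fin d → ℝ)
  | 0 => (preLo (V 0) a b, preHi (V 0) a b)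
  | s + 1 =>
      (preLo (V (s + 1)) (reluV (ibpPre V a b s).1) (reluV (ibpPre V a b s).2),
       preHi (V (s + 1)) (reluV (ibpPre V a b s).1) (reluV (ibpPre V a b s).2))

/-- ReLU parallelogram relaxation slope from scalar pre-activation bounds. -/
noncomputable def Dslope (x y : ℝ) : ℝ :=
  if 0 ≤ x then 1 else if y ≤ 0 then 0 else y / (y - x)

/-- ReLU parallelogram relaxation upper offset from scalar pre-activation bounds. -/
noncomputable def offUp (x y : ℝ) : ℝ :=
  if 0 ≤ x then 0 else if y ≤ 0 then 0 else -(x * y) / (y - x)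

/-- The diagonal slope matrix of the ReLU relaxation at layer `s`. -/
noncomputable def Dmat {d : ℕ} (V : ℕ → Matrix (Fin d) (Fin d) ℝ) (a b : Fin d → ℝ)
    (s : ℕ) : Matrix (Fin d) (Fin d) ℝ :=
  Matrix.diagonal fun i => Dslope ((ibpPre V a b s).1 i) ((ibpPre V a b s).2 i)

/-- The upper offset vector of the ReLU relaxation at layer `s` (lower offset is `0`). -/
noncomputable def offU {d : ℕ} (V : ℕ → Matrix (Fin d) (Fin d) ℝ) (a b : Fin d → ℝ)
    (s : ℕ) : Fin d → ℝ :=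
  fun i => offUp ((ibpPre V a b s).1 i) ((ibpPre V a b s).2 i)

/-- Accumulated slope matrix `W_L^{(kend−t):kend}` of the multi-layer linear lower
approximation of the sub-network ending (linearly) at layer `kend`. -/
noncomputable def Wacc {d : ℕ} (V : ℕ → Matrix (Fin d) (Fin d) ℝ) (a b : Fin d → ℝ)
    (kend : ℕ) : ℕ → Matrix (Fin d) (Fin d) ℝ
  | 0 => V kend
  | t + 1 => (Wacc V a b kend t * Dmat V a b (kend - (t + 1))) * V (kend - (t + 1))

/-- Accumulated bias `b_L^{(kend−t):kend}` of the multi-layer linear lower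
approximation (the network biases and the ReLU lower offsets are `0`). -/
noncomputable def bacc {d : ℕ} (V : ℕ → Matrix (Fin d) (Fin d) ℝ) (a b : Fin d → ℝ)
    (kend : ℕ) : ℕ → Fin d → ℝ
  | 0 => 0
  | t + 1 => (Wacc V a b kend t * Dmat V a b (kend - (t + 1))).mulVec 0
      + (negM (Wacc V a b kend t)).mulVec (offU V a b (kend - (t + 1)))
      + (posM (Wacc V a b kend t)).mulVec 0
      + bacc V a b kend t

/-- Forward ReLU network: composition of layers `0..s` with ReLU activations. -/
noncomputable def fwd {d : ℕ} (V : ℕ → Matrix (Fin d) (Fin d) ℝ) :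
    ℕ → (Fin d → ℝ) → (Fin d → ℝ)
  | 0 => fun x => reluV ((V 0).mulVec x)
  | s + 1 => fun x => reluV ((V (s + 1)).mulVec (fwd V s x))

/-- Sub-network of layers `0..k` with the last ReLU dropped. -/
noncomputable def ftil {d : ℕ} (V : ℕ → Matrix (Fin d) (Fin d) ℝ) (k : ℕ)
    (x : Fin d → ℝ) : Fin d → ℝ :=
  (V k).mulVec (fwd V (k - 1) x)

/-- Constant weight matrices `Wˡ = d^{−p}·J`. -/
noncomputable def Vconst (d : ℕ) (p : ℝ) : ℕ → Matrix (Fin d) (Fin d) ℝ :=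
  fun _ => ((d : ℝ) ^ (-p)) • Matrix.of fun _ _ => (1 : ℝ)

/-!
With every weight matrix equal to `r • J`, `r = d^(-p)`, all neurons of a layer carry the same
pre-activation, a multiple of `r * ∑ j, x j`, and IBP is exact. From the second layer on, the IBP
lower bounds are images of ReLU outputs under a nonnegative matrix, hence nonnegative: those ReLUs
are stably active, and the lower approximation differs from `f̃` only in its first ReLU, replaced
by the parallelogram slope `D₀` on `[ℓ, u] = [r ∑ (x₀ - ε), r ∑ (x₀ + ε)]`. With `c = r d`, both
minima are attained at the lower corner `x₀ - ε`, so the gap is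
`c^(m-1) (max ℓ 0 - D₀ ℓ) ≤ c^(m-1) (u - ℓ) / 4 = c^m ε / 2`, and the depth condition on `m` says
exactly `c^m ε / 2 ≤ δ`.
-/

open Finset

lemma Dslope_nonneg (x y : ℝ) : 0 ≤ Dslope x y := by
  unfold Dslope
  split_ifs with hx hy
  · exact zero_le_one
  · exact le_rfl
  · exact div_nonneg (by linarith) (by linarith)

lemma Dslope_of_nonneg {x : ℝ} (y : ℝ) (hx : 0 ≤ x) : Dslope x y = 1 := if_pos hx

lemma neg_quarter_le_Dslope_mul_sub_max {x y : ℝ} (hxy : x ≤ y) :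
    -((y - x) / 4) ≤ Dslope x y * x - max x 0 := by
  unfold Dslope
  split_ifs with hx hy
  · rw [max_eq_left hx]; linarith
  · rw [max_eq_right (by linarith)]; linarith
  · -- AM-GM: `y * (-x) ≤ (y - x) ^ 2 / 4`
    rw [max_eq_right (by linarith), div_mul_eq_mul_div, sub_zero,
      le_div_iff₀ (by linarith : 0 < y - x)]
    nlinarith [sq_nonneg (x + y)]

section NonnegWeights

variable {d : ℕ}

lemma posM_eq_self {M : Matrix (Fin d) (Fin d) ℝ} (hM : ∀ i j, 0 ≤ M i j) : posM M = M := by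
  ext i j
  exact max_eq_left (hM i j)

lemma posM_neg_eq_zero {M : Matrix (Fin d) (Fin d) ℝ} (hM : ∀ i j, 0 ≤ M i j) :
    posM (-M) = 0 := by
  ext i j
  exact max_eq_right (neg_nonpos.mpr (hM i j))

lemma negM_eq_zero {M : Matrix (Fin d) (Fin d) ℝ} (hM : ∀ i j, 0 ≤ M i j) : negM M = 0 := by
  ext i j
  exact min_eq_right (hM i j)

lemma preLo_eq_mulVec {W : Matrix (Fin d) (Fin d) ℝ} (hW : ∀ i j, 0 ≤ W i j)
    (a b : Fin d → ℝ) : preLo W a b = W *ᵥ a := by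
  rw [preLo, posM_eq_self hW, mulVec_sub, add_sub_cancel]

lemma preHi_eq_mulVec {W : Matrix (Fin d) (Fin d) ℝ} (hW : ∀ i j, 0 ≤ W i j)
    (a b : Fin d → ℝ) : preHi W a b = W *ᵥ b := by
  rw [preHi, posM_neg_eq_zero hW, zero_mulVec, add_zero]

lemma mulVec_apply_nonneg {W : Matrix (Fin d) (Fin d) ℝ} (hW : ∀ i j, 0 ≤ W i j)
    {v : Fin d → ℝ} (hv : ∀ j, 0 ≤ v j) (i : Fin d) : 0 ≤ (W *ᵥ v) i := by
  unfold mulVec dotProduct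
  exact sum_nonneg fun j _ => mul_nonneg (hW i j) (hv j)

lemma Dmat_succ_eq_one {V : ℕ → Matrix (Fin d) (Fin d) ℝ} (hV : ∀ k i j, 0 ≤ V k i j)
    (a b : Fin d → ℝ) (s : ℕ) : Dmat V a b (s + 1) = 1 := by
  rw [Dmat, ← diagonal_one]
  congr 1
  funext i
  rw [ibpPre, preLo_eq_mulVec (hV _)]
  exact Dslope_of_nonneg _ (mulVec_apply_nonneg (hV _) (fun j => le_max_right _ _) i)

lemma Wacc_nonneg {V : ℕ → Matrix (Fin d) (Fin d) ℝ} (hV : ∀ k i j, 0 ≤ V k i j)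
    (a b : Fin d → ℝ) (kend : ℕ) : ∀ t i j, 0 ≤ Wacc V a b kend t i j
  | 0, i, j => hV kend i j
  | t + 1, i, j => by
      rw [Wacc, mul_apply]
      refine sum_nonneg fun l _ => mul_nonneg ?_ (hV _ l j)
      rw [Dmat, mul_diagonal]
      exact mul_nonneg (Wacc_nonneg hV a b kend t i l) (Dslope_nonneg _ _)

lemma bacc_eq_zero {V : ℕ → Matrix (Fin d) (Fin d) ℝ} (hV : ∀ k i j, 0 ≤ V k i j)
    (a b : Fin d → ℝ) (kend : ℕ) : ∀ t, bacc V a b kend t = 0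
  | 0 => rfl
  | t + 1 => by
      rw [bacc, bacc_eq_zero hV a b kend t, negM_eq_zero (Wacc_nonneg hV a b kend t)]
      simp only [mulVec_zero, zero_mulVec, add_zero]

end NonnegWeights

section ConstantWeights

variable (d : ℕ) (p : ℝ)

lemma Vconst_nonneg (k : ℕ) (i j : Fin d) : 0 ≤ Vconst d p k i j := by
  simpa [Vconst] using Real.rpow_nonneg (Nat.cast_nonneg d) (-p)

lemma Vconst_mulVec (k : ℕ) (x : Fin d → ℝ) :
    Vconst d p k *ᵥ x = fun _ => (d : ℝ) ^ (-p) * ∑ j, x j := by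
  funext i
  simp [Vconst, mulVec, dotProduct, mul_sum]

lemma Vconst_mul_Vconst (k k' : ℕ) :
    Vconst d p k * Vconst d p k' = ((d : ℝ) ^ (-p) * d) • Vconst d p 0 := by
  ext i j
  simp only [Vconst, smul_of, mul_apply, of_apply, Pi.smul_apply, smul_eq_mul, mul_one, sum_const,
    card_univ, Fintype.card_fin, nsmul_eq_mul, Matrix.smul_apply]
  ring

lemma Dmat_Vconst_zero (a b : Fin d → ℝ) :
    Dmat (Vconst d p) a b 0 =
      Dslope ((d : ℝ) ^ (-p) * ∑ j, a j) ((d : ℝ) ^ (-p) * ∑ j, b j) • 1 := by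
  rw [Dmat, smul_one_eq_diagonal]
  simp only [ibpPre, preLo_eq_mulVec (Vconst_nonneg d p 0),
    preHi_eq_mulVec (Vconst_nonneg d p 0), Vconst_mulVec]

lemma Wacc_Vconst_of_lt (a b : Fin d → ℝ) {kend : ℕ} :
    ∀ t < kend, Wacc (Vconst d p) a b kend t = ((d : ℝ) ^ (-p) * d) ^ t • Vconst d p 0
  | 0, _ => by rw [pow_zero, one_smul]; rfl
  | t + 1, ht => by
      obtain ⟨s, hs⟩ : ∃ s, kend - (t + 1) = s + 1 := ⟨kend - (t + 2), by omega⟩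
      rw [Wacc, Wacc_Vconst_of_lt a b t (by omega), hs, Dmat_succ_eq_one (Vconst_nonneg d p),
        mul_one, smul_mul_assoc, Vconst_mul_Vconst, smul_smul, pow_succ]

lemma Wacc_Vconst_self (a b : Fin d → ℝ) (k : ℕ) :
    Wacc (Vconst d p) a b (k + 1) (k + 1) =
      (((d : ℝ) ^ (-p) * d) ^ (k + 1) *
        Dslope ((d : ℝ) ^ (-p) * ∑ j, a j) ((d : ℝ) ^ (-p) * ∑ j, b j)) • Vconst d p 0 := by
  rw [Wacc, Wacc_Vconst_of_lt d p a b k (by omega), Nat.sub_self, Dmat_Vconst_zero,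
    mul_smul_comm, mul_one]
  simp only [smul_mul_assoc, Vconst_mul_Vconst, smul_smul]
  ring_nf

lemma lowerApprox_Vconst_apply (a b x : Fin d → ℝ) (k : ℕ) (i : Fin d) :
    (Wacc (Vconst d p) a b (k + 1) (k + 1) *ᵥ x + bacc (Vconst d p) a b (k + 1) (k + 1)) i =
      ((d : ℝ) ^ (-p) * d) ^ (k + 1) *
        Dslope ((d : ℝ) ^ (-p) * ∑ j, a j) ((d : ℝ) ^ (-p) * ∑ j, b j) *
        ((d : ℝ) ^ (-p) * ∑ j, x j) := by
  rw [Wacc_Vconst_self, bacc_eq_zero (Vconst_nonneg d p), add_zero, smul_mulVec, Vconst_mulVec]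
  rfl

lemma fwd_Vconst (x : Fin d → ℝ) :
    ∀ s, fwd (Vconst d p) s x =
      fun _ => ((d : ℝ) ^ (-p) * d) ^ s * max ((d : ℝ) ^ (-p) * ∑ j, x j) 0
  | 0 => by
      funext i
      simp only [fwd, reluV, Vconst_mulVec, pow_zero, one_mul]
  | s + 1 => by
      funext i
      have hr : (0 : ℝ) ≤ (d : ℝ) ^ (-p) := Real.rpow_nonneg (Nat.cast_nonneg d) _
      simp only [fwd, fwd_Vconst x s, reluV, Vconst_mulVec, sum_const, card_univ,
        Fintype.card_fin, nsmul_eq_mul]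
      rw [max_eq_left (by positivity), pow_succ]
      ring

lemma ftil_Vconst_apply (k : ℕ) (x : Fin d → ℝ) (i : Fin d) :
    ftil (Vconst d p) (k + 1) x i =
      ((d : ℝ) ^ (-p) * d) ^ (k + 1) * max ((d : ℝ) ^ (-p) * ∑ j, x j) 0 := by
  simp only [ftil, Nat.add_sub_cancel, fwd_Vconst, Vconst_mulVec, sum_const, card_univ,
    Fintype.card_fin, nsmul_eq_mul, pow_succ]
  ring

end ConstantWeights

lemma sInf_box_eq_at_lower_corner {d : ℕ} {x₀ : Fin d → ℝ} {ε r : ℝ} (hε : 0 ≤ ε) (hr : 0 ≤ r)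
    {g : ℝ → ℝ} (hg : Monotone g) :
    sInf {y : ℝ | ∃ x : Fin d → ℝ, (∀ j, x₀ j - ε ≤ x j ∧ x j ≤ x₀ j + ε) ∧
      y = g (r * ∑ j, x j)} = g (r * ∑ j, (x₀ j - ε)) := by
  refine IsLeast.csInf_eq ⟨⟨_, fun j => ⟨le_rfl, by linarith⟩, rfl⟩, ?_⟩
  rintro y ⟨x, hx, rfl⟩
  exact hg (mul_le_mul_of_nonneg_left (sum_le_sum fun j _ => (hx j).1) hr)

lemma rpow_neg_mul_self_pow_mul_half_le {b p ε δ : ℝ} {m : ℕ} (hb : 1 < b) (hp : 1 < p)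
    (hε : 0 < ε) (hδ : 0 < δ)
    (hm : (m : ℝ) ≥ (1 / (p - 1)) * (Real.log (ε / (2 * δ)) / Real.log b)) :
    (b ^ (-p) * b) ^ m * ε / 2 ≤ δ := by
  have hb0 : 0 < b := by linarith
  have hdepth : ε / (2 * δ) ≤ b ^ ((p - 1) * m) := by
    rw [Real.le_rpow_iff_log_le (by positivity) hb0]
    rw [ge_iff_le, one_div_mul_eq_div, div_le_iff₀ (by linarith),
      div_le_iff₀ (Real.log_pos hb)] at hm
    linarith
  have hinv : (b ^ (-p) * b) ^ m * b ^ ((p - 1) * m) = 1 := by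
    rw [← Real.rpow_add_one hb0.ne', ← Real.rpow_natCast, ← Real.rpow_mul hb0.le,
      ← Real.rpow_add hb0]
    ring_nf
    exact Real.rpow_zero _
  calc (b ^ (-p) * b) ^ m * ε / 2
      = (b ^ (-p) * b) ^ m * δ * (ε / (2 * δ)) := by field_simp
    _ ≤ (b ^ (-p) * b) ^ m * δ * b ^ ((p - 1) * m) := by gcongr
    _ = δ := by rw [mul_right_comm, hinv, one_mul]

/-- Phase transition, contracting regime: for the bias-free ReLU
network with all weight entries `r = d^{−p}`, `p > 1`, input hyper-rectangle
`x₀ ± ε𝟙`, and `m ≥ (1/(p−1))·log_d(ε/(2δ))` layers, the multi-layer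
parallelogram lower approximation `T_L^{1:m}` is `δ`-tight in every coordinate. -/
theorem stmt16 (d m : ℕ) (hd : 2 ≤ d) (hm2 : 2 ≤ m) (p ε δ : ℝ)
    (hp : 1 < p) (hε : 0 < ε) (hδ : 0 < δ) (x₀ : Fin d → ℝ)
    (hm : (m : ℝ) ≥ (1 / (p - 1)) * (Real.log (ε / (2 * δ)) / Real.log d)) :
    ∀ i, sInf {y : ℝ | ∃ x : Fin d → ℝ,
          (∀ j, x₀ j - ε ≤ x j ∧ x j ≤ x₀ j + ε) ∧
          y = ((Wacc (Vconst d p) (fun j => x₀ j - ε) (fun j => x₀ j + ε) (m - 1) (m - 1)).mulVec x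
              + bacc (Vconst d p) (fun j => x₀ j - ε) (fun j => x₀ j + ε) (m - 1) (m - 1)) i}
      ≥ sInf {y : ℝ | ∃ x : Fin d → ℝ,
          (∀ j, x₀ j - ε ≤ x j ∧ x j ≤ x₀ j + ε) ∧
          y = ftil (Vconst d p) (m - 1) x i} - δ := by
  intro i
  obtain ⟨k, hk⟩ : ∃ k, m - 1 = k + 1 := ⟨m - 2, by omega⟩
  have hr : (0 : ℝ) ≤ (d : ℝ) ^ (-p) := Real.rpow_nonneg (Nat.cast_nonneg d) _
  have hc : (0 : ℝ) ≤ (d : ℝ) ^ (-p) * d := by positivity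
  simp only [hk, lowerApprox_Vconst_apply, ftil_Vconst_apply]
  rw [sInf_box_eq_at_lower_corner hε.le hr
      (fun _ _ h => mul_le_mul_of_nonneg_left h
        (mul_nonneg (pow_nonneg hc _) (Dslope_nonneg _ _))),
    sInf_box_eq_at_lower_corner hε.le hr
      (fun _ _ h => mul_le_mul_of_nonneg_left (max_le_max_right 0 h) (pow_nonneg hc _))]
  set c : ℝ := (d : ℝ) ^ (-p) * d
  set lo : ℝ := (d : ℝ) ^ (-p) * ∑ j, (x₀ j - ε)
  set hi : ℝ := (d : ℝ) ^ (-p) * ∑ j, (x₀ j + ε)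
  have hwidth : hi - lo = 2 * c * ε := by
    simp only [hi, lo, c, ← mul_sub, ← sum_sub_distrib, add_sub_sub_cancel, sum_const, card_univ,
      Fintype.card_fin, nsmul_eq_mul]
    ring
  have hgap := mul_le_mul_of_nonneg_left
    (neg_quarter_le_Dslope_mul_sub_max (x := lo) (y := hi) (by nlinarith)) (pow_nonneg hc (k + 1))
  have hdepth : c ^ (k + 2) * ε / 2 ≤ δ := by
    simpa only [show m = k + 2 by omega] using rpow_neg_mul_self_pow_mul_half_le
      (by exact_mod_cast hd : (1 : ℝ) < d) hp hε hδ hm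
  rw [hwidth] at hgap
  linear_combination hgap + hdepth
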